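/- arXiv:2511.09753 — 6 statements merged into one kernel-verified Lean document; each statement's English description precedes it below -/
import Mathlib

section
/- Let A ∈ ℝ^{n×n} be symmetric positive-definite and let (M_i), (R_i), (G_i), (P_i) be the NCG iterates started from M_0 ∈ ℝ^{n×n}. Then for every i ≥ 0 the residuals are orthogonal to all previous gradient directions: (R_{i+1}, G_j)_F = 0 for all j = 0, 1, …, i. -/
open Matrix

/-- Frobenius inner product `(X,Y)_F = trace (Xᵀ Y)`. -/
noncomputable def finner {n : ℕ} (X Y : Matrix (Fin n) (Fin n) ℝ) : ℝ :=
  (Xᵀ * Y).trace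

/-- Frobenius norm `‖X‖_F`. -/
noncomputable def fnorm {n : ℕ} (X : Matrix (Fin n) (Fin n) ℝ) : ℝ :=
  Real.sqrt (finner X X)

/-- A-weighted Frobenius inner product `(X,Y)_{F,A} = trace (Xᵀ A Y)`. -/
noncomputable def finnerA {n : ℕ} (A X Y : Matrix (Fin n) (Fin n) ℝ) : ℝ :=
  (Xᵀ * A * Y).trace

/-- A-weighted Frobenius norm `‖X‖_{F,A}`. -/
noncomputable def fnormA {n : ℕ} (A X : Matrix (Fin n) (Fin n) ℝ) : ℝ :=
  Real.sqrt (finnerA A X X)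

/-- Krylov subspace `K_i(B, X) = span {X, BX, …, B^(i-1) X}`. -/
noncomputable def krylov {n : ℕ} (i : ℕ) (B X : Matrix (Fin n) (Fin n) ℝ) :
    Submodule ℝ (Matrix (Fin n) (Fin n) ℝ) :=
  Submodule.span ℝ {Y | ∃ j < i, Y = B ^ j * X}

/-! Conjugate-gradient recurrences in a vector space `V` with a bilinear form `B` and an operator
`T`, self-adjoint for `B`, satisfy the usual orthogonality relations: `B (r i) (T (r j)) = 0` and
`B (p i) (T (p j)) = 0` for `j < i`. Both are proved together by induction on `i`; write `α i`,
`β i` for the two quotients in `IsCGIteration`. The residual relation at `i + 1` follows from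
`r (i + 1) = r i - α i • T (p i)` because `T (r j)` is `p j` minus a multiple of `p (j - 1)`; the
conjugacy relation at `i + 1` follows from `p (i + 1) = T (r (i + 1)) + β i • p i` because
`α j • T (p j) = r j - r (j + 1)`, and for `j = i` the step sizes `α i` and `β i` are chosen
exactly so that the two terms cancel. NCG is the case `T = A` (the gradient being `G = -A R`)
with the Frobenius form. -/

structure IsCGIteration {K V : Type*} [Field K] [AddCommGroup V] [Module K V]
    (B : LinearMap.BilinForm K V) (T : Module.End K V) (r p : ℕ → V) : Prop where
  p_zero : p 0 = T (r 0)
  r_succ : ∀ i, r (i + 1) = r i - (B (r i) (T (r i)) / B (p i) (T (p i))) • T (p i)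
  p_succ : ∀ i, p (i + 1) =
    T (r (i + 1)) + (B (r (i + 1)) (T (r (i + 1))) / B (r i) (T (r i))) • p i

namespace IsCGIteration

variable {K V : Type*} [Field K] [AddCommGroup V] [Module K V]
  {B : LinearMap.BilinForm K V} {T : Module.End K V} {r p : ℕ → V}

lemma apply_T_T_r_eq (h : IsCGIteration B T r p) (v : V) (j : ℕ)
    (hv : ∀ k < j, B v (T (p k)) = 0) : B v (T (T (r j))) = B v (T (p j)) := by
  cases j with
  | zero => rw [h.p_zero]
  | succ k =>
    have hTr : T (r (k + 1)) =
        p (k + 1) - (B (r (k + 1)) (T (r (k + 1))) / B (r k) (T (r k))) • p k := by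
      rw [h.p_succ k, add_sub_cancel_right]
    rw [hTr, map_sub, map_smul, map_sub, map_smul, hv k k.lt_succ_self, smul_zero, sub_zero]

lemma smul_T_p_eq (h : IsCGIteration B T r p) (j : ℕ) :
    (B (r j) (T (r j)) / B (p j) (T (p j))) • T (p j) = r j - r (j + 1) := by
  rw [h.r_succ j, sub_sub_cancel]

variable (hT : B.IsSelfAdjoint T)
include hT

lemma residual_orthogonal_succ (h : IsCGIteration B T r p) {m : ℕ}
    (hm : ∀ j < m, B (r m) (T (r j)) = 0 ∧ B (p m) (T (p j)) = 0)
    (hpm : B (p m) (T (p m)) ≠ 0) {j : ℕ} (hj : j ≤ m) :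
    B (r (m + 1)) (T (r j)) = 0 := by
  have hpT : B (p m) (T (T (r j))) = B (p m) (T (p j)) :=
    h.apply_T_T_r_eq (p m) j fun k hk => (hm k (hk.trans_le hj)).2
  rw [h.r_succ m, map_sub, map_smul, LinearMap.sub_apply, LinearMap.smul_apply, hT, hpT,
    smul_eq_mul]
  rcases hj.lt_or_eq with hjm | rfl
  · rw [(hm j hjm).1, (hm j hjm).2, mul_zero, sub_zero]
  · rw [div_mul_cancel₀ _ hpm, sub_self]

lemma conjugate_succ (h : IsCGIteration B T r p)
    (hrr : ∀ j, B (r j) (T (r j)) ≠ 0) (hpp : ∀ j, B (p j) (T (p j)) ≠ 0) {m : ℕ}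
    (hpm : ∀ j < m, B (p m) (T (p j)) = 0) (hrm : ∀ j ≤ m, B (r (m + 1)) (T (r j)) = 0)
    {j : ℕ} (hj : j ≤ m) : B (p (m + 1)) (T (p j)) = 0 := by
  have hα : B (r j) (T (r j)) / B (p j) (T (p j)) * B (r (m + 1)) (T (T (p j))) =
      B (r (m + 1)) (T (r j)) - B (r (m + 1)) (T (r (j + 1))) := by
    rw [← smul_eq_mul, ← map_smul, ← map_smul, h.smul_T_p_eq, map_sub, map_sub]
  rw [h.p_succ m, map_add, map_smul, LinearMap.add_apply, LinearMap.smul_apply, hT,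
    smul_eq_mul]
  rcases hj.lt_or_eq with hjm | rfl
  · rw [hrm j hj, hrm (j + 1) hjm, sub_self] at hα
    have hTp := (mul_eq_zero.mp hα).resolve_left (div_ne_zero (hrr j) (hpp j))
    rw [hTp, hpm j hjm, mul_zero, add_zero]
  · rw [hrm j le_rfl, zero_sub] at hα
    field_simp [hrr j, hpp j] at hα ⊢
    linear_combination hα

theorem orthogonal (h : IsCGIteration B T r p)
    (hrr : ∀ j, B (r j) (T (r j)) ≠ 0) (hpp : ∀ j, B (p j) (T (p j)) ≠ 0) :
    ∀ i, ∀ j < i, B (r i) (T (r j)) = 0 ∧ B (p i) (T (p j)) = 0 := by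
  intro i
  induction i with
  | zero => simp
  | succ m ih =>
    have hrm : ∀ j ≤ m, B (r (m + 1)) (T (r j)) = 0 := fun j hj =>
      h.residual_orthogonal_succ hT ih (hpp m) hj
    exact fun j hj => ⟨hrm j (Nat.le_of_lt_succ hj),
      h.conjugate_succ hT hrr hpp (fun k hk => (ih k hk).2) hrm (Nat.le_of_lt_succ hj)⟩

end IsCGIteration

noncomputable def frobeniusForm (n : ℕ) : LinearMap.BilinForm ℝ (Matrix (Fin n) (Fin n) ℝ) :=
  LinearMap.mk₂ ℝ finner (fun _ _ _ => by simp [finner, add_mul]) (fun _ _ _ => by simp [finner])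
    (fun _ _ _ => by simp [finner, mul_add]) (fun _ _ _ => by simp [finner])

lemma frobeniusForm_apply {n : ℕ} (X Y : Matrix (Fin n) (Fin n) ℝ) :
    frobeniusForm n X Y = finner X Y := rfl

lemma finner_mul_left {n : ℕ} (A X Y : Matrix (Fin n) (Fin n) ℝ) :
    finner (A * X) Y = finner X (Aᵀ * Y) := by
  simp [finner, transpose_mul, Matrix.mul_assoc]

lemma finner_neg_right {n : ℕ} (X Y : Matrix (Fin n) (Fin n) ℝ) :
    finner X (-Y) = -finner X Y :=
  map_neg (frobeniusForm n X) Y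

lemma frobeniusForm_isSelfAdjoint_mulLeft {n : ℕ} {A : Matrix (Fin n) (Fin n) ℝ}
    (hA : A.IsSymm) : (frobeniusForm n).IsSelfAdjoint (LinearMap.mulLeft ℝ A) := fun X Y => by
  rw [LinearMap.mulLeft_apply, LinearMap.mulLeft_apply, frobeniusForm_apply, frobeniusForm_apply,
    finner_mul_left, hA.eq]

/-- NCG residuals are orthogonal to all previous gradient directions. -/
theorem ncg_residual_orth_gradients {n : ℕ}
    (A : Matrix (Fin n) (Fin n) ℝ) (hA : A.PosDef)
    (M R G P : ℕ → Matrix (Fin n) (Fin n) ℝ)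
    (hR : ∀ i, R i = 1 - A * M i)
    (hG : ∀ i, G i = -(A * R i))
    (hP0 : P 0 = -G 0)
    (hM : ∀ i, M (i + 1) =
      M i + (-(finner (R i) (G i)) / finner (P i) (A * P i)) • P i)
    (hP : ∀ i, P (i + 1) =
      -G (i + 1) + (finner (R (i + 1)) (G (i + 1)) / finner (R i) (G i)) • P i)
    (hPA : ∀ j, finner (P j) (A * P j) ≠ 0)
    (hRG : ∀ j, finner (R j) (G j) ≠ 0)
    : ∀ i : ℕ, ∀ j ≤ i, finner (R (i + 1)) (G j) = 0 := by
  have hRG_eq (i : ℕ) : finner (R i) (G i) = -finner (R i) (A * R i) := by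
    rw [hG, finner_neg_right]
  have hCG : IsCGIteration (frobeniusForm n) (LinearMap.mulLeft ℝ A) R P := by
    refine ⟨by rw [hP0, hG, neg_neg]; rfl, fun i => ?_, fun i => ?_⟩
    · rw [hR (i + 1), hM i, hRG_eq, neg_neg, Matrix.mul_add, Matrix.mul_smul, ← sub_sub, ← hR i]
      rfl
    · rw [hP i, hRG_eq, hRG_eq, neg_div_neg_eq, hG, neg_neg]
      rfl
  have hrr (j : ℕ) : finner (R j) (A * R j) ≠ 0 := by
    simpa [hRG_eq] using hRG j
  intro i j hj
  rw [hG, finner_neg_right, neg_eq_zero]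
  exact (hCG.orthogonal (frobeniusForm_isSelfAdjoint_mulLeft (isHermitian_iff_isSymm.mp
    hA.isHermitian)) hrr hPA (i + 1) j (Nat.lt_succ_of_le hj)).1
end

section
/- Let A ∈ ℝ^{n×n} be symmetric positive-definite and let (M_i), (R_i), (G_i), (P_i) be the NCG iterates started from M_0 ∈ ℝ^{n×n}. Then for every i ≥ 0 the residuals are orthogonal to all previous search directions: (R_{i+1}, P_j)_F = 0 for all j = 0, 1, …, i. -/
open Matrix

/-!
NCG is the preconditioned conjugate gradient method for the operator `X ↦ A X` with the
preconditioner `X ↦ A X`, on the space of matrices with the Frobenius form: `R i` are the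
residuals, `P i` the search directions and `-G i = A R i` the preconditioned residuals.
The conjugate gradient argument only needs `L` and `C` to be self-adjoint for a bilinear form
`B`: by simultaneous induction, each new residual is `B`-orthogonal to all earlier directions
and each new direction is `L`-conjugate to all earlier ones, because `L (p j)` is a multiple of
`r j - r (j + 1)` and `C (r j)` is a combination of `p j` and `p (j - 1)`.
-/

/-- Preconditioned conjugate gradient iterates: residuals `r` and search directions `p`. -/
structure IsPCGSequence {K E : Type*} [Field K] [AddCommGroup E] [Module K E]
    (B : LinearMap.BilinForm K E) (L C : E → E) (r p : ℕ → E) : Prop where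
  p_zero : p 0 = C (r 0)
  r_succ : ∀ i, r (i + 1) = r i - (B (r i) (C (r i)) / B (p i) (L (p i))) • L (p i)
  p_succ : ∀ i, p (i + 1) =
    C (r (i + 1)) + (B (r (i + 1)) (C (r (i + 1))) / B (r i) (C (r i))) • p i

namespace IsPCGSequence

variable {K E : Type*} [Field K] [AddCommGroup E] [Module K E]
  {B : LinearMap.BilinForm K E} {L C : E → E} {r p : ℕ → E}

theorem L_direction_eq (h : IsPCGSequence B L C r p) {i : ℕ}
    (hρ : B (r i) (C (r i)) ≠ 0) (hσ : B (p i) (L (p i)) ≠ 0) :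
    L (p i) = (B (p i) (L (p i)) / B (r i) (C (r i))) • (r i - r (i + 1)) := by
  rw [h.r_succ i, sub_sub_cancel, smul_smul, div_mul_div_cancel₀ hρ, div_self hσ, one_smul]

theorem C_residual_succ_eq (h : IsPCGSequence B L C r p) (i : ℕ) :
    C (r (i + 1)) = p (i + 1) - (B (r (i + 1)) (C (r (i + 1))) / B (r i) (C (r i))) • p i :=
  eq_sub_of_add_eq (h.p_succ i).symm

theorem residual_direction_self (h : IsPCGSequence B L C r p) {i : ℕ}
    (hr : ∀ j < i, B (r i) (p j) = 0) : B (r i) (p i) = B (r i) (C (r i)) := by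
  cases i with
  | zero => rw [h.p_zero]
  | succ k => simp [h.p_succ k, hr k k.lt_succ_self]

theorem apply_C_residual_eq_zero (h : IsPCGSequence B L C r p) {x : E} {m : ℕ}
    (hx : ∀ j ≤ m, B x (p j) = 0) : ∀ k ≤ m, B x (C (r k)) = 0
  | 0, _ => by rw [← h.p_zero, hx 0 m.zero_le]
  | k + 1, hk => by
    rw [h.C_residual_succ_eq k, map_sub, map_smul, hx (k + 1) hk, hx k (k.le_succ.trans hk),
      smul_zero, sub_zero]

theorem residual_orthogonal_succ (h : IsPCGSequence B L C r p) (hL : B.IsSelfAdjoint L)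
    {i : ℕ} (hσ : B (p i) (L (p i)) ≠ 0)
    (hr : ∀ j < i, B (r i) (p j) = 0) (hp : ∀ j < i, B (p i) (L (p j)) = 0) :
    ∀ j ≤ i, B (r (i + 1)) (p j) = 0 := by
  have expand : ∀ j, B (r (i + 1)) (p j) =
      B (r i) (p j) - B (r i) (C (r i)) / B (p i) (L (p i)) * B (p i) (L (p j)) := by
    intro j
    rw [h.r_succ i, map_sub, map_smul, LinearMap.sub_apply, LinearMap.smul_apply, hL,
      smul_eq_mul]
  intro j hj
  rcases hj.lt_or_eq with hj | rfl
  · rw [expand, hr j hj, hp j hj, mul_zero, sub_zero]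
  · rw [expand, h.residual_direction_self hr, div_mul_cancel₀ _ hσ, sub_self]

theorem direction_conjugate_succ (h : IsPCGSequence B L C r p) (hC : B.IsSelfAdjoint C)
    {i : ℕ} (hρ : ∀ j ≤ i, B (r j) (C (r j)) ≠ 0) (hσ : ∀ j ≤ i, B (p j) (L (p j)) ≠ 0)
    (hr : ∀ j ≤ i, B (r (i + 1)) (p j) = 0) (hp : ∀ j < i, B (p i) (L (p j)) = 0) :
    ∀ j ≤ i, B (p (i + 1)) (L (p j)) = 0 := by
  have hCr := h.apply_C_residual_eq_zero hr
  have hCrL : ∀ j ≤ i, B (C (r (i + 1))) (L (p j)) =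
      B (p j) (L (p j)) / B (r j) (C (r j)) *
        (B (r (i + 1)) (C (r j)) - B (r (i + 1)) (C (r (j + 1)))) := by
    intro j hj
    conv_lhs => rw [h.L_direction_eq (hρ j hj) (hσ j hj)]
    rw [map_smul, map_sub, hC, hC, smul_eq_mul]
  have expand : ∀ j, B (p (i + 1)) (L (p j)) = B (C (r (i + 1))) (L (p j)) +
      B (r (i + 1)) (C (r (i + 1))) / B (r i) (C (r i)) * B (p i) (L (p j)) := by
    intro j
    rw [h.p_succ i, map_add, map_smul, LinearMap.add_apply, LinearMap.smul_apply, smul_eq_mul]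
  intro j hj
  rcases hj.lt_or_eq with hj | rfl
  · rw [expand, hCrL j hj.le, hCr j hj.le, hCr (j + 1) hj, hp j hj]
    ring
  · rw [expand, hCrL j le_rfl, hCr j le_rfl]
    field_simp [hρ j le_rfl]
    ring

theorem orthogonal_and_conjugate (h : IsPCGSequence B L C r p)
    (hL : B.IsSelfAdjoint L) (hC : B.IsSelfAdjoint C)
    (hρ : ∀ j, B (r j) (C (r j)) ≠ 0) (hσ : ∀ j, B (p j) (L (p j)) ≠ 0) (i : ℕ) :
    (∀ j < i, B (r i) (p j) = 0) ∧ (∀ j < i, B (p i) (L (p j)) = 0) := by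
  induction i with
  | zero => simp
  | succ i ih =>
    have hr := h.residual_orthogonal_succ hL (hσ i) ih.1 ih.2
    refine ⟨fun j hj => hr j (Nat.le_of_lt_succ hj), fun j hj => ?_⟩
    exact h.direction_conjugate_succ hC (fun j _ => hρ j) (fun j _ => hσ j) hr ih.2 j
      (Nat.le_of_lt_succ hj)

end IsPCGSequence

noncomputable def finnerForm {n : ℕ} : LinearMap.BilinForm ℝ (Matrix (Fin n) (Fin n) ℝ) :=
  LinearMap.mk₂ ℝ finner
    (fun X Y Z => by simp [finner, add_mul])
    (fun c X Y => by simp [finner])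
    (fun X Y Z => by simp [finner, mul_add])
    (fun c X Y => by simp [finner])

@[simp]
theorem finnerForm_apply {n : ℕ} (X Y : Matrix (Fin n) (Fin n) ℝ) :
    finnerForm X Y = finner X Y :=
  rfl

theorem finnerForm_isSelfAdjoint_mul_left {n : ℕ} {A : Matrix (Fin n) (Fin n) ℝ}
    (hA : A.IsSymm) : finnerForm.IsSelfAdjoint (A * ·) := fun X Y => by
  simp [finner, transpose_mul, hA.eq, Matrix.mul_assoc]

/-- NCG residuals are orthogonal to all previous search directions. -/
theorem ncg_residual_orth_directions {n : ℕ}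
    (A : Matrix (Fin n) (Fin n) ℝ) (hA : A.PosDef)
    (M R G P : ℕ → Matrix (Fin n) (Fin n) ℝ)
    (hR : ∀ i, R i = 1 - A * M i)
    (hG : ∀ i, G i = -(A * R i))
    (hP0 : P 0 = -G 0)
    (hM : ∀ i, M (i + 1) =
      M i + (-(finner (R i) (G i)) / finner (P i) (A * P i)) • P i)
    (hP : ∀ i, P (i + 1) =
      -G (i + 1) + (finner (R (i + 1)) (G (i + 1)) / finner (R i) (G i)) • P i)
    (hPA : ∀ j, finner (P j) (A * P j) ≠ 0)
    (hRG : ∀ j, finner (R j) (G j) ≠ 0)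
    : ∀ i : ℕ, ∀ j ≤ i, finner (R (i + 1)) (P j) = 0 := by
  have hRG_eq : ∀ i, finner (R i) (G i) = -finner (R i) (A * R i) := fun i => by
    simp [finner, hG i]
  have hPCG : IsPCGSequence finnerForm (A * ·) (A * ·) R P :=
    { p_zero := by rw [hP0, hG 0, neg_neg]
      r_succ := fun i => by
        rw [hR (i + 1), hM i, hRG_eq i, neg_neg, Matrix.mul_add, Matrix.mul_smul,
          sub_add_eq_sub_sub, ← hR i]
        rfl
      p_succ := fun i => by
        rw [hP i, hRG_eq (i + 1), hRG_eq i, neg_div_neg_eq, hG (i + 1), neg_neg]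
        rfl }
  have hSA := finnerForm_isSelfAdjoint_mul_left (isHermitian_iff_isSymm.mp hA.isHermitian)
  have hρ : ∀ j, finnerForm (R j) (A * R j) ≠ 0 := fun j => by
    simpa [hRG_eq] using hRG j
  intro i j hj
  exact (hPCG.orthogonal_and_conjugate hSA hSA hρ hPA (i + 1)).1 j (Nat.lt_succ_of_le hj)
end

section
/- Let A ∈ ℝ^{n×n} be symmetric positive-definite and let (M_i), (R_i), (G_i), (P_i) be the NCG iterates started from M_0 ∈ ℝ^{n×n}. Then the search directions are mutually A-orthogonal: for every i ≥ 0, (P_{i+1}, A P_j)_F = 0 for all j = 0, 1, …, i. -/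
open Matrix

lemma finner_add_left {n : ℕ} (X Y Z : Matrix (Fin n) (Fin n) ℝ) :
    finner (X + Y) Z = finner X Z + finner Y Z := by
  simp [finner, Matrix.add_mul]

lemma finner_sub_left {n : ℕ} (X Y Z : Matrix (Fin n) (Fin n) ℝ) :
    finner (X - Y) Z = finner X Z - finner Y Z := by
  simp [finner, Matrix.sub_mul]

lemma finner_smul_left {n : ℕ} (c : ℝ) (X Y : Matrix (Fin n) (Fin n) ℝ) :
    finner (c • X) Y = c * finner X Y := by
  simp [finner, Matrix.smul_mul]

lemma finner_sub_right {n : ℕ} (X Y Z : Matrix (Fin n) (Fin n) ℝ) :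
    finner X (Y - Z) = finner X Y - finner X Z := by
  simp [finner, Matrix.mul_sub]

lemma finner_smul_right {n : ℕ} (c : ℝ) (X Y : Matrix (Fin n) (Fin n) ℝ) :
    finner X (c • Y) = c * finner X Y := by
  simp [finner, Matrix.mul_smul]

lemma finner_A_left {n : ℕ} {A : Matrix (Fin n) (Fin n) ℝ} (hAT : Aᵀ = A)
    (X Y : Matrix (Fin n) (Fin n) ℝ) :
    finner (A * X) Y = finner X (A * Y) := by
  simp [finner, Matrix.transpose_mul, hAT, Matrix.mul_assoc]

/-- NCG search directions are mutually A-orthogonal. -/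
theorem ncg_directions_A_orth {n : ℕ}
    (A : Matrix (Fin n) (Fin n) ℝ) (hA : A.PosDef)
    (M R G P : ℕ → Matrix (Fin n) (Fin n) ℝ)
    (hR : ∀ i, R i = 1 - A * M i)
    (hG : ∀ i, G i = -(A * R i))
    (hP0 : P 0 = -G 0)
    (hM : ∀ i, M (i + 1) =
      M i + (-(finner (R i) (G i)) / finner (P i) (A * P i)) • P i)
    (hP : ∀ i, P (i + 1) =
      -G (i + 1) + (finner (R (i + 1)) (G (i + 1)) / finner (R i) (G i)) • P i)
    (hPA : ∀ j, finner (P j) (A * P j) ≠ 0)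
    (hRG : ∀ j, finner (R j) (G j) ≠ 0)
    : ∀ i : ℕ, ∀ j ≤ i, finner (P (i + 1)) (A * P j) = 0 := by
  have hAT : Aᵀ = A := by simpa [Matrix.IsHermitian] using hA.1
  set ρ : ℕ → ℝ := fun i => finner (R i) (A * R i) with hρdef
  have hRGρ : ∀ i, finner (R i) (G i) = -ρ i := by
    intro i; rw [hG, finner_neg_right]
  have hρ0 : ∀ i, ρ i ≠ 0 := by
    intro i
    have := hRG i
    rw [hRGρ i] at this
    simpa using this
  set α : ℕ → ℝ := fun i => ρ i / finner (P i) (A * P i) with hαdef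
  have hα0 : ∀ i, α i ≠ 0 := fun i => div_ne_zero (hρ0 i) (hPA i)
  have hαv : ∀ i, -(finner (R i) (G i)) / finner (P i) (A * P i) = α i := by
    intro i; rw [hRGρ i, neg_neg]
  have hRrec : ∀ i, R (i + 1) = R i - α i • (A * P i) := by
    intro i
    rw [hR (i + 1), hM i, hαv i, hR i]
    rw [Matrix.mul_add, Matrix.mul_smul, sub_add_eq_sub_sub]
  have hP0' : P 0 = A * R 0 := by rw [hP0, hG, neg_neg]
  have hPrec : ∀ i, P (i + 1) = A * R (i + 1) + (ρ (i + 1) / ρ i) • P i := by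
    intro i
    rw [hP i, hRGρ (i + 1), hRGρ i, hG (i + 1), neg_neg, neg_div_neg_eq]
  have key : ∀ i, (∀ j < i, finner (R i) (A * R j) = 0) ∧
      (∀ j < i, finner (P i) (A * P j) = 0) := by
    intro i
    induction i with
    | zero => exact ⟨fun j hj => absurd hj (Nat.not_lt_zero j),
        fun j hj => absurd hj (Nat.not_lt_zero j)⟩
    | succ i ih =>
      obtain ⟨ihA, ihB⟩ := ih
      -- (P i, A * (A * R j)) for j ≤ i
      have hPAz : ∀ j ≤ i, finner (P i) (A * (A * R j)) =
          if j = i then finner (P i) (A * P i) else 0 := by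
        intro j hj
        match j with
        | 0 =>
          rw [← hP0']
          by_cases h0 : (0 : ℕ) = i
          · simp [h0]
          · simp only [h0, if_false]
            exact ihB 0 (Nat.lt_of_le_of_ne hj h0)
        | k + 1 =>
          have : A * R (k + 1) = P (k + 1) - (ρ (k + 1) / ρ k) • P k := by
            rw [hPrec k, add_sub_cancel_right]
          rw [this, Matrix.mul_sub, Matrix.mul_smul, finner_sub_right,
            finner_smul_right]
          have hk : finner (P i) (A * P k) = 0 :=
            ihB k (Nat.lt_of_lt_of_le (Nat.lt_succ_self k) hj)
          by_cases hki : k + 1 = i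
          · simp [hki, hk]
          · have : finner (P i) (A * P (k + 1)) = 0 :=
              ihB (k + 1) (Nat.lt_of_le_of_ne hj hki)
            simp [hki, hk, this]
      have newA : ∀ j < i + 1, finner (R (i + 1)) (A * R j) = 0 := by
        intro j hj
        have hj' : j ≤ i := Nat.lt_succ_iff.mp hj
        rw [hRrec i, finner_sub_left, finner_smul_left,
          finner_A_left hAT, hPAz j hj']
        by_cases hji : j = i
        · subst hji
          rw [if_pos rfl]
          have h : finner (R j) (A * R j) = ρ j := rfl
          rw [h]
          simp only [hαdef]
          rw [div_mul_cancel₀ _ (hPA j), sub_self]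
        · simp only [hji, if_false, mul_zero, sub_zero]
          exact ihA j (Nat.lt_of_le_of_ne hj' hji)
      have newB : ∀ j < i + 1, finner (P (i + 1)) (A * P j) = 0 := by
        intro j hj
        have hj' : j ≤ i := Nat.lt_succ_iff.mp hj
        have hAPj : A * P j = (α j)⁻¹ • (R j - R (j + 1)) := by
          rw [hRrec j, sub_sub_cancel, smul_smul, inv_mul_cancel₀ (hα0 j),
            one_smul]
        have t1 : finner (A * R (i + 1)) (A * P j) =
            (α j)⁻¹ * (finner (R (i + 1)) (A * R j)
              - finner (R (i + 1)) (A * R (j + 1))) := by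
          rw [finner_A_left hAT, hAPj, Matrix.mul_smul, finner_smul_right,
            Matrix.mul_sub, finner_sub_right]
        rw [hPrec i, finner_add_left, finner_smul_left, t1,
          newA j hj, zero_sub]
        by_cases hji : j = i
        · subst hji
          have h2 : finner (R (j + 1)) (A * R (j + 1)) = ρ (j + 1) := rfl
          have hinv : (α j)⁻¹ = finner (P j) (A * P j) / ρ j := by
            simp only [hαdef]
            rw [inv_div]
          rw [h2, hinv]
          ring
        · have h2 : finner (R (i + 1)) (A * R (j + 1)) = 0 :=
            newA (j + 1) (Nat.succ_lt_succ (Nat.lt_of_le_of_ne hj' hji))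
          have h3 : finner (P i) (A * P j) = 0 :=
            ihB j (Nat.lt_of_le_of_ne hj' hji)
          rw [h2, h3]
          ring
      exact ⟨newA, newB⟩
  intro i j hj
  exact (key (i + 1)).2 j (Nat.lt_succ_of_le hj)
end

section
/- Let A ∈ ℝ^{n×n} be symmetric positive-definite and let (M_i), (R_i), (G_i), (P_i) be the NCG iterates started from M_0 ∈ ℝ^{n×n}. Then for every i ≥ 0, both the gradient direction and the search direction lie in the Krylov subspace of A² generated by the initial gradient: G_i ∈ K_{i+1}(A², G_0) and P_i ∈ K_{i+1}(A², G_0). -/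
open Matrix

lemma krylov_mono {n : ℕ} {i j : ℕ} (h : i ≤ j) (B X : Matrix (Fin n) (Fin n) ℝ) :
    krylov i B X ≤ krylov j B X :=
  Submodule.span_mono (fun Y ⟨k, hk, hY⟩ => ⟨k, lt_of_lt_of_le hk h, hY⟩)

lemma krylov_self {n : ℕ} {i : ℕ} (hi : 0 < i) (B X : Matrix (Fin n) (Fin n) ℝ) :
    X ∈ krylov i B X := by
  apply Submodule.subset_span
  exact ⟨0, hi, by simp⟩

lemma krylov_mul {n : ℕ} {i : ℕ} {B X Y : Matrix (Fin n) (Fin n) ℝ}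
    (h : Y ∈ krylov i B X) : B * Y ∈ krylov (i + 1) B X := by
  induction h using Submodule.span_induction with
  | mem Z hZ =>
    obtain ⟨j, hj, rfl⟩ := hZ
    apply Submodule.subset_span
    exact ⟨j + 1, by omega, by rw [pow_succ', mul_assoc]⟩
  | zero => simp
  | add a b _ _ ha hb => rw [mul_add]; exact add_mem ha hb
  | smul c a _ ha => rw [Matrix.mul_smul]; exact Submodule.smul_mem _ _ ha

/-- NCG gradient and search directions lie in the Krylov subspace of A²
generated by the initial gradient. -/
theorem ncg_directions_mem_krylov {n : ℕ}
    (A : Matrix (Fin n) (Fin n) ℝ) (hA : A.PosDef)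
    (M R G P : ℕ → Matrix (Fin n) (Fin n) ℝ)
    (hR : ∀ i, R i = 1 - A * M i)
    (hG : ∀ i, G i = -(A * R i))
    (hP0 : P 0 = -G 0)
    (hM : ∀ i, M (i + 1) =
      M i + (-(finner (R i) (G i)) / finner (P i) (A * P i)) • P i)
    (hP : ∀ i, P (i + 1) =
      -G (i + 1) + (finner (R (i + 1)) (G (i + 1)) / finner (R i) (G i)) • P i)
    (hPA : ∀ j, finner (P j) (A * P j) ≠ 0)
    (hRG : ∀ j, finner (R j) (G j) ≠ 0)
    : ∀ i : ℕ, G i ∈ krylov (i + 1) (A ^ 2) (G 0) ∧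
        P i ∈ krylov (i + 1) (A ^ 2) (G 0) := by
  intro i
  induction i with
  | zero =>
    constructor
    · exact krylov_self one_pos _ _
    · rw [hP0]; exact neg_mem (krylov_self one_pos _ _)
  | succ i ih =>
    obtain ⟨hGi, hPi⟩ := ih
    have hGstep : G (i + 1) = G i +
        (-(finner (R i) (G i)) / finner (P i) (A * P i)) • ((A ^ 2) * P i) := by
      rw [hG (i+1), hR (i+1), hM i, hG i, hR i]
      simp only [Matrix.mul_add, Matrix.mul_smul, Matrix.mul_sub, Matrix.mul_one]
      rw [sq, mul_assoc]
      abel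
    have hG1 : G (i + 1) ∈ krylov (i + 2) (A ^ 2) (G 0) := by
      rw [hGstep]
      exact add_mem (krylov_mono (by omega) _ _ hGi)
        (Submodule.smul_mem _ _ (krylov_mul hPi))
    refine ⟨hG1, ?_⟩
    rw [hP i]
    exact add_mem (neg_mem hG1)
      (Submodule.smul_mem _ _ (krylov_mono (by omega) _ _ hPi))
end

section
/- Let A ∈ ℝ^{n×n} be symmetric positive-definite with smallest eigenvalue λ_min and largest eigenvalue λ_max, and let κ := λ_max/λ_min. Let M_0 ∈ ℝ^{n×n}, R_0 := I_n − A M_0, G_0 := −A R_0. Then for every i ≥ 0, the minimum of ‖A⁻¹ − M‖_{F,A} over M ∈ M_0 + K_i(A², G_0) is at most 2·((κ−1)/(κ+1))^i · ‖A⁻¹ − M_0‖_{F,A}. -/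
open Matrix

/-!
Writing `E₀ = A⁻¹ - M₀`, the gradient is `G₀ = -A² E₀`, so for `M = M₀ + w(A²) G₀` with
`deg w < i` the error is `A⁻¹ - M = r(A²) E₀` where `r = 1 + X w` ranges over the polynomials of
degree at most `i` with `r(0) = 1`. If `|r(λ²)| ≤ c` on the spectrum of `A`, then
`c² A - r(A²) A r(A²)` is positive semidefinite, so `‖r(A²) E₀‖_{F,A} ≤ c ‖E₀‖_{F,A}`.
The spectrum of `A²` lies in `[a², b²]` with `a = λ_min`, `b = λ_max`, and there the rescaled
Chebyshev polynomial `T_i(ℓ x) / T_i(ℓ 0)`, with `ℓ` the affine map of `[a², b²]` onto `[-1, 1]`,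
is bounded by `1 / T_i(ℓ 0) = 2 / (z^i + z^{-i}) ≤ 2 z^{-i}`, where
`z = (b + a) / (b - a) = (κ + 1) / (κ - 1)`.
-/

open Polynomial

namespace Polynomial

theorem Chebyshev.T_real_eval_half_add_inv (k : ℕ) {z : ℝ} (hz : 0 < z) :
    (T ℝ k).eval ((z + z⁻¹) / 2) = (z ^ k + (z ^ k)⁻¹) / 2 := by
  rw [← Real.cosh_log hz, T_real_cosh, Int.cast_natCast, ← Real.log_pow,
    Real.cosh_log (pow_pos hz k)]

theorem exists_eq_one_add_X_mul {R : Type*} [CommRing R] [Nontrivial R] {r : R[X]} {i : ℕ}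
    (hr0 : r.eval 0 = 1) (hr : r.natDegree ≤ i) : ∃ w : R[X], w.degree < i ∧ r = 1 + X * w := by
  obtain ⟨w, hw⟩ : X ∣ r - 1 := X_dvd_iff.2 (by simp [coeff_zero_eq_eval_zero, hr0])
  refine ⟨w, ?_, by rw [← hw]; ring⟩
  rcases eq_or_ne w 0 with rfl | hw0
  · simp
  have h := natDegree_sub_le r 1
  rw [hw, natDegree_X_mul hw0, natDegree_one] at h
  rw [degree_eq_natDegree hw0, Nat.cast_lt]
  omega

end Polynomial

theorem exists_eval_zero_eq_one_abs_eval_le_of_lt (i : ℕ) {a b : ℝ} (ha : 0 < a) (hab : a < b) :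
    ∃ r : ℝ[X], r.eval 0 = 1 ∧ r.natDegree ≤ i ∧
      ∀ x ∈ Set.Icc (a ^ 2) (b ^ 2), |r.eval x| ≤ 2 * ((b - a) / (b + a)) ^ i := by
  have hd : 0 < b ^ 2 - a ^ 2 := by nlinarith
  have hba : b - a ≠ 0 := by linarith
  have hba' : b + a ≠ 0 := by linarith
  have hz : 0 < (b + a) / (b - a) := div_pos (by linarith) (by linarith)
  set ℓ : ℝ[X] := C (b ^ 2 - a ^ 2)⁻¹ * (C (b ^ 2 + a ^ 2) - 2 * X)
  have hℓ : ∀ x ∈ Set.Icc (a ^ 2) (b ^ 2), |ℓ.eval x| ≤ 1 := by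
    intro x hx
    simp only [ℓ, eval_mul, eval_C, eval_sub, eval_X, eval_ofNat, abs_mul, abs_inv, abs_of_pos hd]
    rw [inv_mul_le_iff₀ hd, mul_one, abs_le]
    constructor <;> linarith [hx.1, hx.2]
  have hℓ0 : ℓ.eval 0 = ((b + a) / (b - a) + ((b + a) / (b - a))⁻¹) / 2 := by
    simp only [ℓ, eval_mul, eval_C, eval_sub, eval_X, eval_ofNat]
    field_simp
    ring
  set t := (Chebyshev.T ℝ i).eval (ℓ.eval 0) with ht_def
  have ht : t = (((b + a) / (b - a)) ^ i + (((b + a) / (b - a)) ^ i)⁻¹) / 2 := by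
    rw [ht_def, hℓ0, Chebyshev.T_real_eval_half_add_inv i hz]
  have ht0 : 0 < t := by rw [ht]; positivity
  refine ⟨C t⁻¹ * (Chebyshev.T ℝ i).comp ℓ, ?_, ?_, fun x hx => ?_⟩
  · simp only [eval_mul, eval_C, eval_comp]
    exact inv_mul_cancel₀ ht0.ne'
  · refine (natDegree_C_mul_le _ _).trans ?_
    rw [natDegree_comp, Chebyshev.natDegree_T, Int.natAbs_natCast]
    have : ℓ.natDegree ≤ 1 := by simp only [ℓ]; compute_degree
    nlinarith
  · have hzi : 0 < ((b + a) / (b - a)) ^ i := pow_pos hz i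
    calc |(C t⁻¹ * (Chebyshev.T ℝ i).comp ℓ).eval x|
        = t⁻¹ * |(Chebyshev.T ℝ i).eval (ℓ.eval x)| := by
          rw [eval_mul, eval_C, eval_comp, abs_mul, abs_of_pos (inv_pos.2 ht0)]
      _ ≤ t⁻¹ := mul_le_of_le_one_right (inv_pos.2 ht0).le
          (Chebyshev.abs_eval_T_real_le_one _ (hℓ x hx))
      _ ≤ 2 * ((b - a) / (b + a)) ^ i := by
          rw [← inv_div (b + a), inv_pow, ← div_eq_mul_inv, ← inv_div]
          exact inv_anti₀ (by positivity) (by rw [ht]; linarith [inv_pos.2 hzi])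

theorem exists_eval_zero_eq_one_abs_eval_le (i : ℕ) {a b : ℝ} (ha : 0 < a) (hab : a ≤ b) :
    ∃ r : ℝ[X], r.eval 0 = 1 ∧ r.natDegree ≤ i ∧
      ∀ x ∈ Set.Icc (a ^ 2) (b ^ 2), |r.eval x| ≤ 2 * ((b - a) / (b + a)) ^ i := by
  obtain rfl | hab := hab.eq_or_lt
  · refine ⟨(1 - C (a ^ 2)⁻¹ * X) ^ i, by simp, by compute_degree, fun x hx => ?_⟩
    have hx : x = a ^ 2 := le_antisymm hx.2 hx.1
    have ha2 : a ^ 2 ≠ 0 := by positivity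
    simpa [hx, ha2] using le_mul_of_one_le_left (by positivity) one_le_two
  · exact exists_eval_zero_eq_one_abs_eval_le_of_lt i ha hab

namespace Matrix

variable {ι : Type*} [Fintype ι] [DecidableEq ι]

theorem transpose_aeval {R : Type*} [CommRing R] (A : Matrix ι ι R) (p : R[X]) :
    (aeval A p)ᵀ = aeval Aᵀ p := by
  induction p using Polynomial.induction_on' with
  | add p q hp hq => simp only [map_add, transpose_add, hp, hq]
  | monomial k c => simp [aeval_monomial, Algebra.algebraMap_eq_smul_one, transpose_pow]

theorem inv_sub_add_aeval_sq_mul {R : Type*} [CommRing R] {A : Matrix ι ι R} (hA : IsUnit A.det)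
    (M₀ : Matrix ι ι R) (w : R[X]) :
    A⁻¹ - (M₀ + aeval (A ^ 2) w * -(A * (1 - A * M₀))) =
      aeval (A ^ 2) (1 + X * w) * (A⁻¹ - M₀) := by
  have h : A * (1 - A * M₀) = A ^ 2 * (A⁻¹ - M₀) := by
    rw [sq, mul_assoc, mul_sub A A⁻¹, mul_nonsing_inv A hA]
  rw [h, mul_comm X w, map_add, map_one, map_mul, aeval_X]
  noncomm_ring

theorem IsHermitian.spectrum_subset_Icc {A : Matrix ι ι ℝ} (hA : A.IsHermitian) :
    spectrum ℝ A ⊆ Set.Icc (⨅ k, hA.eigenvalues k) (⨆ k, hA.eigenvalues k) := by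
  rw [hA.spectrum_real_eq_range_eigenvalues]
  rintro _ ⟨k, rfl⟩
  exact ⟨ciInf_le (Set.finite_range _).bddBelow k, le_ciSup (Set.finite_range _).bddAbove k⟩

open scoped MatrixOrder in
theorem IsHermitian.posSemidef_aeval {A : Matrix ι ι ℝ} (hA : A.IsHermitian) {q : ℝ[X]}
    (hq : ∀ x ∈ spectrum ℝ A, 0 ≤ q.eval x) : (aeval A q).PosSemidef := by
  rw [← nonneg_iff_posSemidef, ← cfc_polynomial q A hA.isSelfAdjoint]
  exact cfc_nonneg hq

end Matrix

section WeightedFrobenius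

variable {n : ℕ}

theorem aeval_mul_mem_krylov {i : ℕ} {B G : Matrix (Fin n) (Fin n) ℝ} {p : ℝ[X]}
    (hp : p.degree < i) : aeval B p * G ∈ krylov i B G := by
  rcases eq_or_ne p 0 with rfl | hp0
  · simp
  rw [aeval_eq_sum_range' ((natDegree_lt_iff_degree_lt hp0).2 hp), Finset.sum_mul]
  refine Submodule.sum_mem _ fun j hj => ?_
  rw [smul_mul_assoc]
  exact Submodule.smul_mem _ _ (Submodule.subset_span ⟨j, Finset.mem_range.mp hj, rfl⟩)

theorem finnerA_aeval_mul_le {A : Matrix (Fin n) (Fin n) ℝ} (hA : A.PosSemidef) {p : ℝ[X]} {c : ℝ}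
    (hc : ∀ x ∈ spectrum ℝ A, |p.eval x| ≤ c) (E : Matrix (Fin n) (Fin n) ℝ) :
    finnerA A (aeval A p * E) (aeval A p * E) ≤ c ^ 2 * finnerA A E E := by
  have hq : (aeval A (C (c ^ 2) * X - p * X * p)).PosSemidef := by
    refine hA.isHermitian.posSemidef_aeval fun x hx => ?_
    have hx0 : 0 ≤ x := (Matrix.posSemidef_iff_isHermitian_and_spectrum_nonneg.1 hA).2 hx
    have hpx : p.eval x ^ 2 ≤ c ^ 2 :=
      sq_le_sq' (neg_le_of_abs_le (hc x hx)) (le_of_abs_le (hc x hx))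
    simp only [eval_sub, eval_mul, eval_C, eval_X]
    nlinarith
  have hsym : (aeval A p)ᵀ = aeval A p := by
    rw [Matrix.transpose_aeval, ← Matrix.conjTranspose_eq_transpose_of_trivial, hA.isHermitian.eq]
  have h := (hq.conjTranspose_mul_mul_same E).trace_nonneg
  simp only [map_sub, map_mul, aeval_C, aeval_X, Algebra.algebraMap_eq_smul_one, smul_mul_assoc,
    one_mul, Matrix.conjTranspose_eq_transpose_of_trivial, Matrix.mul_sub, Matrix.sub_mul,
    Matrix.trace_sub, Matrix.mul_smul, Matrix.trace_smul] at h
  simp only [finnerA, Matrix.transpose_mul, hsym, smul_eq_mul, Matrix.mul_assoc] at h ⊢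
  linarith

theorem fnormA_aeval_mul_le {A : Matrix (Fin n) (Fin n) ℝ} (hA : A.PosSemidef) {p : ℝ[X]} {c : ℝ}
    (hc0 : 0 ≤ c) (hc : ∀ x ∈ spectrum ℝ A, |p.eval x| ≤ c) (E : Matrix (Fin n) (Fin n) ℝ) :
    fnormA A (aeval A p * E) ≤ c * fnormA A E := by
  rw [fnormA, fnormA, ← Real.sqrt_sq hc0, ← Real.sqrt_mul (sq_nonneg c)]
  exact Real.sqrt_le_sqrt (finnerA_aeval_mul_le hA hc E)

end WeightedFrobenius

/-- Convergence bound for NCG iterates: the best A-weighted Frobenius error over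
the affine Krylov subspace of A² decays at least like 2 ((κ−1)/(κ+1))^i. -/
theorem ncg_error_bound {n : ℕ} (hn : 0 < n)
    (A M₀ : Matrix (Fin n) (Fin n) ℝ) (hA : A.PosDef)
    (R₀ G₀ : Matrix (Fin n) (Fin n) ℝ)
    (hR₀ : R₀ = 1 - A * M₀) (hG₀ : G₀ = -(A * R₀))
    (κ : ℝ) (hκ : κ = (⨆ k, hA.1.eigenvalues k) / (⨅ k, hA.1.eigenvalues k)) :
    ∀ i : ℕ, ∃ M : Matrix (Fin n) (Fin n) ℝ,
      (∃ V ∈ krylov i (A ^ 2) G₀, M = M₀ + V) ∧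
      fnormA A (A⁻¹ - M) ≤ 2 * ((κ - 1) / (κ + 1)) ^ i * fnormA A (A⁻¹ - M₀) := by
  intro i
  have : Nonempty (Fin n) := ⟨⟨0, hn⟩⟩
  set a := ⨅ k, hA.1.eigenvalues k
  set b := ⨆ k, hA.1.eigenvalues k
  have hspec : spectrum ℝ A ⊆ Set.Icc a b := hA.1.spectrum_subset_Icc
  have ha : 0 < a := by
    obtain ⟨k, hk⟩ := exists_eq_ciInf_of_finite (f := hA.1.eigenvalues)
    simpa only [hk] using hA.eigenvalues_pos k
  have hab : a ≤ b := by
    obtain ⟨hak, hkb⟩ := hspec (hA.1.eigenvalues_mem_spectrum_real ⟨0, hn⟩)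
    exact hak.trans hkb
  obtain ⟨r, hr0, hrdeg, hrbound⟩ := exists_eval_zero_eq_one_abs_eval_le i ha hab
  obtain ⟨w, hw, rfl⟩ := exists_eq_one_add_X_mul hr0 hrdeg
  refine ⟨M₀ + aeval (A ^ 2) w * G₀, ⟨_, aeval_mul_mem_krylov hw, rfl⟩, ?_⟩
  have hκab : (κ - 1) / (κ + 1) = (b - a) / (b + a) := by rw [hκ]; field_simp
  have hsq : aeval (A ^ 2) (1 + X * w) = aeval A ((1 + X * w).comp (X ^ 2)) := by
    rw [aeval_comp, map_pow, aeval_X]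
  rw [hG₀, hR₀, Matrix.inv_sub_add_aeval_sq_mul hA.det_pos.ne'.isUnit, hκab, hsq]
  refine fnormA_aeval_mul_le hA.posSemidef
    (mul_nonneg zero_le_two (pow_nonneg (div_nonneg (sub_nonneg.2 hab) (by linarith)) i))
    (fun x hx => ?_) _
  obtain ⟨hax, hxb⟩ := hspec hx
  simpa [eval_comp] using
    hrbound (x ^ 2) ⟨pow_le_pow_left₀ ha.le hax 2, pow_le_pow_left₀ (ha.le.trans hax) hxb 2⟩
end

section
/- Let A ∈ ℝ^{n×n} be symmetric positive-definite, M_0 ∈ ℝ^{n×n}, R_0 := I_n − A M_0, and i ≥ 1. Then a matrix M* ∈ M_0 + K_i(A, R_0) satisfies the Galerkin condition (I_n − AM*, V)_F = 0 for all V ∈ K_i(A, R_0) if and only if M* minimizes the A-weighted Frobenius norm of the error over the affine Krylov subspace: ‖A⁻¹ − M*‖_{F,A} = min { ‖A⁻¹ − M‖_{F,A} : M ∈ M_0 + K_i(A, R_0) }. -/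
/-!
Since `A` is symmetric and `A A⁻¹ = 1`, the Galerkin residual pairing is the `A`-weighted pairing
with the error: `(I - A M, V)_F = (A⁻¹ - M, V)_{F,A}`. So the Galerkin condition says that the
error `E = A⁻¹ - M*` is `A`-orthogonal to the Krylov space `K`, and the theorem is the usual
characterisation of best approximation in a (semi-)inner product: for `V ∈ K` and `t ∈ ℝ`,
`‖E + tV‖² = ‖E‖² + 2t (E, V) + t² ‖V‖²`, which is `≥ ‖E‖²` for all `t` iff `(E, V) = 0`.
-/

open Matrix

section AWeighted

variable {n : ℕ} {A : Matrix (Fin n) (Fin n) ℝ}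

lemma finnerA_self_nonneg (hA : A.PosSemidef) (X : Matrix (Fin n) (Fin n) ℝ) :
    0 ≤ finnerA A X X := by
  simpa [finnerA, conjTranspose_eq_transpose_of_trivial] using
    (hA.conjTranspose_mul_mul_same X).trace_nonneg

lemma finnerA_comm (hA : A.IsSymm) (X Y : Matrix (Fin n) (Fin n) ℝ) :
    finnerA A X Y = finnerA A Y X := by
  rw [finnerA, ← trace_transpose, transpose_mul, transpose_mul, transpose_transpose, hA.eq,
    ← Matrix.mul_assoc, finnerA]

lemma finnerA_add_right (X Y Z : Matrix (Fin n) (Fin n) ℝ) :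
    finnerA A X (Y + Z) = finnerA A X Y + finnerA A X Z := by
  simp [finnerA, Matrix.mul_add]

lemma finnerA_smul_left (t : ℝ) (X Y : Matrix (Fin n) (Fin n) ℝ) :
    finnerA A (t • X) Y = t * finnerA A X Y := by
  simp [finnerA]

lemma finnerA_smul_right (t : ℝ) (X Y : Matrix (Fin n) (Fin n) ℝ) :
    finnerA A X (t • Y) = t * finnerA A X Y := by
  simp [finnerA]

lemma finnerA_add_add_self (hA : A.IsSymm) (X Y : Matrix (Fin n) (Fin n) ℝ) :
    finnerA A (X + Y) (X + Y) = finnerA A X X + 2 * finnerA A X Y + finnerA A Y Y := by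
  rw [finnerA_add_right, finnerA_comm hA, finnerA_comm hA (X + Y), finnerA_add_right,
    finnerA_add_right, finnerA_comm hA Y X]
  ring

lemma fnormA_le_fnormA_iff (hA : A.PosSemidef) (X Y : Matrix (Fin n) (Fin n) ℝ) :
    fnormA A X ≤ fnormA A Y ↔ finnerA A X X ≤ finnerA A Y Y :=
  Real.sqrt_le_sqrt_iff (finnerA_self_nonneg hA Y)

lemma finner_one_sub_mul_eq_finnerA (hA : A.IsSymm) (hdet : IsUnit A.det)
    (M V : Matrix (Fin n) (Fin n) ℝ) :
    finner (1 - A * M) V = finnerA A (A⁻¹ - M) V := by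
  have hres : (A⁻¹ - M)ᵀ * A = (1 - A * M)ᵀ := by
    rw [← hA.eq, ← transpose_mul, hA.eq, Matrix.mul_sub, mul_nonsing_inv A hdet]
  rw [finner, finnerA, hres]

lemma forall_finnerA_eq_zero_iff (hA : A.PosSemidef)
    (K : Submodule ℝ (Matrix (Fin n) (Fin n) ℝ)) (E : Matrix (Fin n) (Fin n) ℝ) :
    (∀ V ∈ K, finnerA A E V = 0) ↔ ∀ V ∈ K, finnerA A E E ≤ finnerA A (E + V) (E + V) := by
  have hsymm : A.IsSymm := isHermitian_iff_isSymm.mp hA.1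
  constructor
  · intro horth V hV
    rw [finnerA_add_add_self hsymm, horth V hV]
    linarith [finnerA_self_nonneg hA V]
  · intro hmin V hV
    have hquad : ∀ t : ℝ, 0 ≤ finnerA A V V * (t * t) + 2 * finnerA A E V * t + 0 := by
      intro t
      have h := hmin (t • V) (K.smul_mem t hV)
      rw [finnerA_add_add_self hsymm, finnerA_smul_right, finnerA_smul_left,
        finnerA_smul_right] at h
      linarith
    have hsq : finnerA A E V ^ 2 ≤ 0 := by
      have := discrim_le_zero hquad
      rw [discrim] at this
      linarith
    exact pow_eq_zero_iff two_ne_zero |>.mp (le_antisymm hsq (sq_nonneg _))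

end AWeighted

theorem cg_galerkin_iff_optimal_general {n : ℕ}
    (A M₀ Mstar : Matrix (Fin n) (Fin n) ℝ) (hA : A.PosDef)
    (R₀ : Matrix (Fin n) (Fin n) ℝ)
    (i : ℕ)
    (hMstar : ∃ V ∈ krylov i A R₀, Mstar = M₀ + V) :
    (∀ V ∈ krylov i A R₀, finner (1 - A * Mstar) V = 0) ↔
      (∀ M : Matrix (Fin n) (Fin n) ℝ, (∃ V ∈ krylov i A R₀, M = M₀ + V) →
        fnormA A (A⁻¹ - Mstar) ≤ fnormA A (A⁻¹ - M)) := by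
  obtain ⟨Vs, hVs, rfl⟩ := hMstar
  have hsymm : A.IsSymm := isHermitian_iff_isSymm.mp hA.1
  simp only [finner_one_sub_mul_eq_finnerA hsymm hA.det_pos.ne'.isUnit,
    fnormA_le_fnormA_iff hA.posSemidef, forall_finnerA_eq_zero_iff hA.posSemidef]
  constructor
  · rintro hmin M ⟨V, hV, rfl⟩
    convert hmin (Vs - V) (sub_mem hVs hV) using 2 <;> abel
  · intro hmin V hV
    convert hmin (M₀ + (Vs - V)) ⟨_, sub_mem hVs hV, rfl⟩ using 2 <;> abel

/-- Optimality of CG iterates: a matrix in the affine Krylov subspace of A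
satisfies the Galerkin condition iff it minimizes the A-weighted Frobenius norm
of the error over that affine subspace. -/
theorem cg_galerkin_iff_optimal {n : ℕ}
    (A M₀ Mstar : Matrix (Fin n) (Fin n) ℝ) (hA : A.PosDef)
    (R₀ : Matrix (Fin n) (Fin n) ℝ) (hR₀ : R₀ = 1 - A * M₀)
    (i : ℕ) (hi : 1 ≤ i)
    (hMstar : ∃ V ∈ krylov i A R₀, Mstar = M₀ + V) :
    (∀ V ∈ krylov i A R₀, finner (1 - A * Mstar) V = 0) ↔
      (∀ M : Matrix (Fin n) (Fin n) ℝ, (∃ V ∈ krylov i A R₀, M = M₀ + V) →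
        fnormA A (A⁻¹ - Mstar) ≤ fnormA A (A⁻¹ - M)) :=
  cg_galerkin_iff_optimal_general A M₀ Mstar hA R₀ i hMstar
end
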